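/- Let N ⊆ M be finite-dimensional von Neumann algebras, E_N : M → N a conditional expectation with module basis {ξ_i}_{i=1}^n (E_N(ξ_i† ξ_j) = δ_{ij} p_i for projections p_i ∈ N), and let Φ : M → M be an N-bimodule map. Then Φ is completely positive if and only if its module Choi operator χ_Φ = Σ_{i,j} |i⟩⟨j| ⊗ Φ(ξ_i† ξ_j) is a positive operator in B(ℓ_2^n) ⊗ M. -/
import Mathlib


open scoped ENNReal Matrix ComplexOrder BigOperators
open Filter

/-- the operator norm `‖·‖∞` of a matrix, acting on the Euclidean space `ℓ₂` -/
noncomputable def opNorm {m n : Type*} [Fintype m] [Fintype n] [DecidableEq n]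
    (A : Matrix m n ℂ) : ℝ :=
  ‖LinearMap.toContinuousLinearMap (Matrix.toEuclideanLin A)‖

/-- the set of `k × k` block matrices all of whose blocks lie in `P` (i.e. `M_k(P)`) -/
def blockSet {ι : Type*} (k : ℕ) (P : Set (Matrix ι ι ℂ)) :
    Set (Matrix (Fin k × ι) (Fin k × ι) ℂ) :=
  {X | ∀ i j : Fin k, (Matrix.of fun a b => X (i, a) (j, b)) ∈ P}

/-- the amplification `id_k ⊗ T` of a map on matrices, acting blockwise -/
noncomputable def amplify {ι : Type*} (k : ℕ) (T : Matrix ι ι ℂ → Matrix ι ι ℂ)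
    (X : Matrix (Fin k × ι) (Fin k × ι) ℂ) : Matrix (Fin k × ι) (Fin k × ι) ℂ :=
  Matrix.of fun p q => T (Matrix.of fun a b => X (p.1, a) (q.1, b)) p.2 q.2

/-- `T` is completely positive as a map on the operator system `P`: all amplifications
`id_k ⊗ T` preserve positive semidefiniteness of matrices with blocks in `P` -/
def IsCPOn {ι : Type*} [Fintype ι] (P : Set (Matrix ι ι ℂ))
    (T : Matrix ι ι ℂ → Matrix ι ι ℂ) : Prop :=
  ∀ (k : ℕ) (X : Matrix (Fin k × ι) (Fin k × ι) ℂ),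
    X ∈ blockSet k P → X.PosSemidef → (amplify k T X).PosSemidef

/-- `E` is a conditional expectation onto the von Neumann subalgebra `N ⊆ M`:
a unital completely positive `N`-bimodule projection onto `N`. -/
structure IsCondExp {ι : Type*} [Fintype ι] [DecidableEq ι]
    (M N : StarSubalgebra ℂ (Matrix ι ι ℂ))
    (E : Matrix ι ι ℂ →ₗ[ℂ] Matrix ι ι ℂ) : Prop where
  le : N ≤ M
  mem : ∀ x, E x ∈ N
  fixes : ∀ x ∈ N, E x = x
  bimod : ∀ a ∈ N, ∀ b ∈ N, ∀ x, E (a * x * b) = a * E x * b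
  cp : IsCPOn (M : Set (Matrix ι ι ℂ)) ⇑E

/-- the module Choi operator `χ_Φ = Σ_{i,j} |i⟩⟨j| ⊗ Φ(ξ_i† ξ_j)` of a bimodule map `Φ`
with respect to the module basis `ξ` -/
noncomputable def modChoi {ι : Type*} [Fintype ι] [DecidableEq ι] {nb : ℕ}
    (Φ : Matrix ι ι ℂ →ₗ[ℂ] Matrix ι ι ℂ) (ξ : Fin nb → Matrix ι ι ℂ) :
    Matrix (Fin nb × ι) (Fin nb × ι) ℂ :=
  Matrix.of fun p q => Φ ((ξ p.1)ᴴ * ξ q.1) p.2 q.2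

section Aux

lemma myAevalDiagonal {n : Type*} [Fintype n] [DecidableEq n] (d : n → ℂ) (q : Polynomial ℂ) :
    Polynomial.aeval (Matrix.diagonal d) q = Matrix.diagonal fun i => q.eval (d i) := by
  induction q using Polynomial.induction_on' with
  | add p q hp hq =>
      rw [map_add, hp, hq, Matrix.diagonal_add]
      congr 1
      funext i
      simp
  | monomial m a =>
      rw [Polynomial.aeval_monomial, Matrix.algebraMap_eq_diagonal, Matrix.diagonal_pow,
        Matrix.diagonal_mul_diagonal]
      congr 1
      funext i
      simp [Polynomial.eval_monomial]

lemma myAevalConj {n : Type*} [Fintype n] [DecidableEq n] (U A : Matrix n n ℂ)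
    (hU1 : star U * U = 1) (hU2 : U * star U = 1) (q : Polynomial ℂ) :
    Polynomial.aeval (U * A * star U) q = U * Polynomial.aeval A q * star U := by
  induction q using Polynomial.induction_on' with
  | add p q hp hq => simp only [map_add, hp, hq, Matrix.mul_add, Matrix.add_mul]
  | monomial m a =>
      have hpow : ∀ m : ℕ, (U * A * star U) ^ m = U * A ^ m * star U := by
        intro m
        induction m with
        | zero => simp [hU2]
        | succ m ih =>
            rw [pow_succ, pow_succ, ih]
            calc U * A ^ m * star U * (U * A * star U)
                = U * A ^ m * (star U * U) * (A * star U) := by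
                  simp only [Matrix.mul_assoc]
              _ = U * (A ^ m * A) * star U := by
                  rw [hU1, Matrix.mul_one]; simp only [Matrix.mul_assoc]
      simp only [Polynomial.aeval_monomial, hpow]
      have : ∀ B : Matrix n n ℂ, algebraMap ℂ (Matrix n n ℂ) a * B = a • B := fun B => by
        rw [Algebra.algebraMap_eq_smul_one, smul_mul_assoc, one_mul]
      rw [this, this, Matrix.mul_smul, Matrix.smul_mul]

lemma myPolySqrt {n : Type*} [Fintype n] [DecidableEq n] {X : Matrix n n ℂ}
    (hX : X.PosSemidef) :
    ∃ q : Polynomial ℂ, (Polynomial.aeval X q)ᴴ = Polynomial.aeval X q ∧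
      Polynomial.aeval X q * Polynomial.aeval X q = X := by
  have hH := hX.1
  set U : Matrix n n ℂ := (hH.eigenvectorUnitary : Matrix n n ℂ) with hUdef
  have hU1 : star U * U = 1 := Matrix.mem_unitaryGroup_iff'.mp hH.eigenvectorUnitary.2
  have hU2 : U * star U = 1 := Matrix.mem_unitaryGroup_iff.mp hH.eigenvectorUnitary.2
  set d : n → ℂ := fun i => (hH.eigenvalues i : ℂ) with hddef
  have hspec : X = U * Matrix.diagonal d * star U := hH.spectral_theorem
  set s : Finset ℂ := Finset.image d Finset.univ with hsdef
  set q : Polynomial ℂ := Lagrange.interpolate s id (fun z => (Real.sqrt z.re : ℂ)) with hqdef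
  have heval : ∀ i, q.eval (d i) = (Real.sqrt (hH.eigenvalues i) : ℂ) := by
    intro i
    have : q.eval (id (d i)) = (Real.sqrt ((d i).re) : ℂ) :=
      Lagrange.eval_interpolate_at_node _ (Set.injOn_id _)
        (Finset.mem_image_of_mem d (Finset.mem_univ i))
    simpa [hddef] using this
  have haq : Polynomial.aeval X q
      = U * Matrix.diagonal (fun i => (Real.sqrt (hH.eigenvalues i) : ℂ)) * star U := by
    conv_lhs => rw [hspec]
    rw [myAevalConj U _ hU1 hU2, myAevalDiagonal]
    rw [funext heval]
  refine ⟨q, ?_, ?_⟩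
  · rw [haq]
    rw [Matrix.conjTranspose_mul, Matrix.conjTranspose_mul, ← Matrix.star_eq_conjTranspose U,
      ← Matrix.star_eq_conjTranspose (star U), star_star, Matrix.diagonal_conjTranspose]
    rw [Matrix.mul_assoc]
    have : (star fun i => (Real.sqrt (hH.eigenvalues i) : ℂ))
        = fun i => (Real.sqrt (hH.eigenvalues i) : ℂ) := by
      funext i; simp [Complex.conj_ofReal]
    rw [this]
  · rw [haq]
    calc U * Matrix.diagonal (fun i => (Real.sqrt (hH.eigenvalues i) : ℂ)) * star U *
          (U * Matrix.diagonal (fun i => (Real.sqrt (hH.eigenvalues i) : ℂ)) * star U)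
        = U * (Matrix.diagonal (fun i => (Real.sqrt (hH.eigenvalues i) : ℂ)) *
            Matrix.diagonal (fun i => (Real.sqrt (hH.eigenvalues i) : ℂ))) * star U := by
          simp only [Matrix.mul_assoc]
          rw [← Matrix.mul_assoc (star U) U, hU1, Matrix.one_mul]
      _ = U * Matrix.diagonal d * star U := by
          have : (fun i => (Real.sqrt (hH.eigenvalues i) : ℂ) * (Real.sqrt (hH.eigenvalues i) : ℂ))
              = d := by
            funext i
            rw [← Complex.ofReal_mul, Real.mul_self_sqrt (hX.eigenvalues_nonneg i)]
          rw [Matrix.diagonal_mul_diagonal, this]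
      _ = X := hspec.symm

/-- the block set of a star subalgebra is a subalgebra -/
def blockAlg {ι : Type*} [Fintype ι] [DecidableEq ι] (k : ℕ)
    (M : StarSubalgebra ℂ (Matrix ι ι ℂ)) :
    Subalgebra ℂ (Matrix (Fin k × ι) (Fin k × ι) ℂ) where
  carrier := blockSet k (M : Set (Matrix ι ι ℂ))
  mul_mem' := by
    intro X Y hX hY i j
    have h : (Matrix.of fun a b => (X * Y) (i, a) (j, b))
        = ∑ r : Fin k, (Matrix.of fun a b => X (i, a) (r, b))
            * (Matrix.of fun a b => Y (r, a) (j, b)) := by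
      ext a b
      simp [Matrix.mul_apply, Matrix.sum_apply, Fintype.sum_prod_type]
    rw [SetLike.mem_coe] at *
    rw [h]
    exact Subalgebra.sum_mem _ fun r _ =>
      mul_mem (SetLike.mem_coe.mp (hX i r)) (SetLike.mem_coe.mp (hY r j))
  add_mem' := by
    intro X Y hX hY i j
    have h : (Matrix.of fun a b => (X + Y) (i, a) (j, b))
        = (Matrix.of fun a b => X (i, a) (j, b)) + (Matrix.of fun a b => Y (i, a) (j, b)) := by
      ext a b; simp
    rw [SetLike.mem_coe]
    rw [h]
    exact add_mem (SetLike.mem_coe.mp (hX i j)) (SetLike.mem_coe.mp (hY i j))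
  algebraMap_mem' := by
    intro c i j
    rw [SetLike.mem_coe]
    by_cases h : i = j
    · subst h
      have : (Matrix.of fun a b => (algebraMap ℂ (Matrix (Fin k × ι) (Fin k × ι) ℂ) c) (i, a) (i, b))
          = algebraMap ℂ (Matrix ι ι ℂ) c := by
        ext a b
        simp [Matrix.algebraMap_eq_diagonal, Matrix.diagonal_apply, Prod.ext_iff]
      rw [this]
      exact Subalgebra.algebraMap_mem _ c
    · have : (Matrix.of fun a b => (algebraMap ℂ (Matrix (Fin k × ι) (Fin k × ι) ℂ) c) (i, a) (j, b))
          = 0 := by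
        ext a b
        simp [Matrix.algebraMap_eq_diagonal, Matrix.diagonal_apply, Prod.ext_iff, h]
      rw [this]
      exact zero_mem _

lemma blockSet_aeval_mem {ι : Type*} [Fintype ι] [DecidableEq ι] (k : ℕ)
    (M : StarSubalgebra ℂ (Matrix ι ι ℂ)) {X : Matrix (Fin k × ι) (Fin k × ι) ℂ}
    (hX : X ∈ blockSet k (M : Set (Matrix ι ι ℂ))) (q : Polynomial ℂ) :
    Polynomial.aeval X q ∈ blockSet k (M : Set (Matrix ι ι ℂ)) := by
  have hX' : X ∈ blockAlg k M := hX
  have h : ((Polynomial.aeval (⟨X, hX'⟩ : blockAlg k M) q : blockAlg k M) :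
          Matrix (Fin k × ι) (Fin k × ι) ℂ) = Polynomial.aeval X q :=
    (Polynomial.aeval_algHom_apply (blockAlg k M).val (⟨X, hX'⟩ : blockAlg k M) q).symm
  rw [← h]
  exact (Polynomial.aeval (⟨X, hX'⟩ : blockAlg k M) q).2

end Aux

/-- **CP ⟺ positivity of the module Choi operator.**
An `N`-bimodule map `Φ : M → M` is completely positive if and only if its module Choi
operator `χ_Φ = Σ_{i,j} |i⟩⟨j| ⊗ Φ(ξ_i† ξ_j)` is a positive operator in `B(ℓ₂ⁿ) ⊗ M`. -/
theorem bimodule_cp_iff_choi_posSemidef {ι : Type*} [Fintype ι] [DecidableEq ι]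
    (M N : StarSubalgebra ℂ (Matrix ι ι ℂ))
    (E : Matrix ι ι ℂ →ₗ[ℂ] Matrix ι ι ℂ) (hE : IsCondExp M N E)
    (Φ : Matrix ι ι ℂ →ₗ[ℂ] Matrix ι ι ℂ)
    (hΦM : ∀ x ∈ M, Φ x ∈ M)
    (hΦbimod : ∀ a ∈ N, ∀ b ∈ N, ∀ x, Φ (a * x * b) = a * Φ x * b)
    -- `ξ` is a module basis for `E_N` with projections `p i ∈ N`
    (nb : ℕ) (ξ : Fin nb → Matrix ι ι ℂ) (hξM : ∀ i, ξ i ∈ M)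
    (p : Fin nb → Matrix ι ι ℂ) (hpN : ∀ i, p i ∈ N)
    (hpProj : ∀ i, p i * p i = p i ∧ (p i)ᴴ = p i)
    (hbasis : ∀ i j, E ((ξ i)ᴴ * ξ j) = if i = j then p i else 0)
    (hspan : ∀ x ∈ M, x = ∑ i, ξ i * E ((ξ i)ᴴ * x)) :
    IsCPOn (M : Set (Matrix ι ι ℂ)) ⇑Φ ↔ (modChoi Φ ξ).PosSemidef := by
  have hξMstar : ∀ i, (ξ i)ᴴ ∈ M := fun i => by
    rw [← Matrix.star_eq_conjTranspose]; exact star_mem (hξM i)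
  constructor
  · -- CP → Choi PSD
    intro hCP
    set X₀ : Matrix (Fin nb × ι) (Fin nb × ι) ℂ :=
      Matrix.of fun pq qq => ((ξ pq.1)ᴴ * ξ qq.1) pq.2 qq.2 with hX₀def
    have hblocks : ∀ i j : Fin nb, (Matrix.of fun a b => X₀ (i, a) (j, b)) = (ξ i)ᴴ * ξ j := by
      intro i j; ext a b; rfl
    have hX₀b : X₀ ∈ blockSet nb (M : Set (Matrix ι ι ℂ)) := by
      intro i j
      rw [hblocks]
      exact SetLike.mem_coe.mpr (mul_mem (hξMstar i) (hξM j))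
    have hX₀psd : X₀.PosSemidef := by
      have h : X₀ = (Matrix.of fun (c : ι) (pq : Fin nb × ι) => ξ pq.1 c pq.2)ᴴ
          * (Matrix.of fun (c : ι) (pq : Fin nb × ι) => ξ pq.1 c pq.2) := by
        ext pq qq
        show ((ξ pq.1)ᴴ * ξ qq.1) pq.2 qq.2 = _
        simp [Matrix.mul_apply, Matrix.conjTranspose_apply]
      rw [h]
      exact Matrix.posSemidef_conjTranspose_mul_self _
    have h := hCP nb X₀ hX₀b hX₀psd
    have heq : amplify nb (⇑Φ) X₀ = modChoi Φ ξ := by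
      ext pq qq
      show Φ (Matrix.of fun a b => X₀ (pq.1, a) (qq.1, b)) pq.2 qq.2 = _
      rw [hblocks]
      rfl
    rwa [heq] at h
  · -- Choi PSD → CP
    intro hχ k X hXb hXpsd
    obtain ⟨q, hSH, hSS⟩ := myPolySqrt hXpsd
    set S : Matrix (Fin k × ι) (Fin k × ι) ℂ := Polynomial.aeval X q with hSdef
    have hSmem : S ∈ blockSet k (M : Set (Matrix ι ι ℂ)) := blockSet_aeval_mem k M hXb q
    set Sb : Fin k → Fin k → Matrix ι ι ℂ :=
      fun r t => Matrix.of fun a b => S (r, a) (t, b) with hSbdef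
    have hSbM : ∀ r t, Sb r t ∈ M := fun r t => SetLike.mem_coe.mp (hSmem r t)
    have hXblock : ∀ s t : Fin k, (Matrix.of fun a b => X (s, a) (t, b))
        = ∑ r, (Sb r s)ᴴ * Sb r t := by
      intro s t
      ext a b
      have hX' : X (s, a) (t, b) = ∑ r : Fin k, ∑ c : ι, S (s, a) (r, c) * S (r, c) (t, b) := by
        rw [← hSS]; simp [Matrix.mul_apply, Fintype.sum_prod_type]
      rw [Matrix.of_apply, hX', Matrix.sum_apply]
      refine Finset.sum_congr rfl fun r _ => ?_
      rw [Matrix.mul_apply]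
      refine Finset.sum_congr rfl fun c _ => ?_
      congr 1
      · show S (s, a) (r, c) = star (Sb r s c a)
        conv_lhs => rw [← hSH]
        rfl
    -- key bimodule identity
    have hNstar : ∀ z : Matrix ι ι ℂ, (E z)ᴴ ∈ N := fun z => by
      rw [← Matrix.star_eq_conjTranspose]; exact star_mem (hE.mem z)
    have hkey : ∀ y ∈ M, ∀ x ∈ M, Φ (yᴴ * x)
        = ∑ i, ∑ j, (E ((ξ i)ᴴ * y))ᴴ * Φ ((ξ i)ᴴ * ξ j) * E ((ξ j)ᴴ * x) := by
      intro y hy x hx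
      have hdec : yᴴ * x = ∑ i, ∑ j,
          (E ((ξ i)ᴴ * y))ᴴ * ((ξ i)ᴴ * ξ j) * E ((ξ j)ᴴ * x) := by
        conv_lhs => rw [hspan y hy, hspan x hx]
        rw [Matrix.conjTranspose_sum, Finset.sum_mul]
        refine Finset.sum_congr rfl fun i _ => ?_
        rw [Finset.mul_sum]
        refine Finset.sum_congr rfl fun j _ => ?_
        rw [Matrix.conjTranspose_mul]
        simp only [Matrix.mul_assoc]
      rw [hdec, map_sum]
      refine Finset.sum_congr rfl fun i _ => ?_
      rw [map_sum]
      refine Finset.sum_congr rfl fun j _ => ?_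
      exact hΦbimod _ (hNstar _) _ (hE.mem _) _
    -- the W matrices
    set W : Fin k → Matrix (Fin nb × ι) (Fin k × ι) ℂ := fun r =>
      Matrix.of fun u tc => E ((ξ u.1)ᴴ * Sb r tc.1) u.2 tc.2 with hWdef
    have main : amplify k (⇑Φ) X = ∑ r, (W r)ᴴ * modChoi Φ ξ * W r := by
      ext pq qq
      show Φ (Matrix.of fun a b => X (pq.1, a) (qq.1, b)) pq.2 qq.2 = _
      rw [hXblock pq.1 qq.1, map_sum, Matrix.sum_apply, Matrix.sum_apply]
      refine Finset.sum_congr rfl fun r _ => ?_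
      rw [hkey (Sb r pq.1) (hSbM r pq.1) (Sb r qq.1) (hSbM r qq.1)]
      rw [Matrix.sum_apply]
      simp only [Matrix.sum_apply, Matrix.mul_apply, Matrix.conjTranspose_apply,
        Matrix.of_apply, Finset.sum_mul, Finset.mul_sum, Fintype.sum_prod_type,
        modChoi, hWdef]
      exact Finset.sum_comm.trans (Finset.sum_congr rfl fun j _ => Finset.sum_comm)
    rw [main]
    exact Finset.sum_induction _ _ (fun A B hA hB => hA.add hB) Matrix.PosSemidef.zero
      (fun r _ => hχ.conjTranspose_mul_mul_same (W r))
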